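/- arXiv:2407.15238 — 2 statements merged into one kernel-verified Lean document; each statement's English description precedes it below -/
import Mathlib

section
/- For every x, x̄ ∈ ℝⁿ and every t ∈ (0,1), the map t ↦ ρ(x; x̄, t) is differentiable at t and ∂ₜρ(x; x̄, t) = −(1/2)·ρ(x; x̄, t)·(γ(x, x̄) − γ̄(x̄, t)). -/
open MeasureTheory Real Set
open scoped RealInnerProductSpace

noncomputable section

/-- Gaussian prior density `q(x) = ∏ᵢ (2πωᵢ²)^(−1/2) exp(−xᵢ²/(2ωᵢ²))`. -/
def qprior {n : ℕ} (ω : Fin n → ℝ) (x : EuclideanSpace ℝ (Fin n)) : ℝ :=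
  ∏ i, ((2 * π * ω i ^ 2) ^ (-(1 / 2) : ℝ) * Real.exp (-(x i) ^ 2 / (2 * ω i ^ 2)))

/-- Conditional data likelihood `p(x̄|x) = ∏ᵢ (2πσᵢ²)^(−1/2) exp(−(x̄ᵢ−xᵢ)²/(2σᵢ²))`. -/
def plik {n : ℕ} (σ : Fin n → ℝ) (xb x : EuclideanSpace ℝ (Fin n)) : ℝ :=
  ∏ i, ((2 * π * σ i ^ 2) ^ (-(1 / 2) : ℝ) * Real.exp (-(xb i - x i) ^ 2 / (2 * σ i ^ 2)))

/-- Log-linear function `f(x; x̄, t) = log q(x) + t·log p(x̄|x)`. -/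
def fhom {n : ℕ} (ω σ : Fin n → ℝ) (x xb : EuclideanSpace ℝ (Fin n)) (t : ℝ) : ℝ :=
  Real.log (qprior ω x) + t * Real.log (plik σ xb x)

/-- Conditional homotopy `ρ(x; x̄, t) = exp f(x; x̄, t) / ∫ exp f(y; x̄, t) dy`. -/
def ρcond {n : ℕ} (ω σ : Fin n → ℝ) (x xb : EuclideanSpace ℝ (Fin n)) (t : ℝ) : ℝ :=
  Real.exp (fhom ω σ x xb t) / ∫ y, Real.exp (fhom ω σ y xb t)

/-- Innovation `γ(x, x̄) = ∑ᵢ (xᵢ − x̄ᵢ)²/σᵢ²`. -/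
def γinn {n : ℕ} (σ : Fin n → ℝ) (x xb : EuclideanSpace ℝ (Fin n)) : ℝ :=
  ∑ i, (x i - xb i) ^ 2 / σ i ^ 2

/-- Expected innovation `γ̄(x̄, t) = ∫ ρ(y; x̄, t)·γ(y, x̄) dy`. -/
def γbar {n : ℕ} (ω σ : Fin n → ℝ) (xb : EuclideanSpace ℝ (Fin n)) (t : ℝ) : ℝ :=
  ∫ y, ρcond ω σ y xb t * γinn σ y xb

/- ### Auxiliary lemmas -/

lemma aux_mul_exp_neg_le {a u : ℝ} (ha : 0 < a) :
    u * Real.exp (-(a * u)) ≤ 1 / a := by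
  rw [Real.exp_neg, ← div_eq_mul_inv, div_le_div_iff₀ (Real.exp_pos _) ha]
  nlinarith [Real.add_one_le_exp (a * u)]

lemma qprior_pos {n : ℕ} (ω : Fin n → ℝ) (hω : ∀ i, 0 < ω i) (x : EuclideanSpace ℝ (Fin n)) :
    0 < qprior ω x := by
  apply Finset.prod_pos
  intro i _
  have := hω i
  positivity

lemma plik_pos {n : ℕ} (σ : Fin n → ℝ) (hσ : ∀ i, 0 < σ i) (xb x : EuclideanSpace ℝ (Fin n)) :
    0 < plik σ xb x := by
  apply Finset.prod_pos
  intro i _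
  have := hσ i
  positivity

lemma qprior_integrable {n : ℕ} (ω : Fin n → ℝ) (hω : ∀ i, 0 < ω i) :
    Integrable (fun x : EuclideanSpace ℝ (Fin n) => qprior ω x) := by
  have h := EuclideanSpace.volume_preserving_symm_measurableEquiv_toLp (Fin n)
  rw [← MeasurePreserving.integrable_comp_emb h.symm (MeasurableEquiv.measurableEmbedding _)]
  have he : ((fun x : EuclideanSpace ℝ (Fin n) => qprior ω x) ∘
      (MeasurableEquiv.toLp 2 (Fin n → ℝ)).symm.symm)
      = fun v : Fin n → ℝ =>
        ∏ i, ((2 * π * ω i ^ 2) ^ (-(1 / 2) : ℝ) * Real.exp (-(v i) ^ 2 / (2 * ω i ^ 2))) := rfl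
  rw [he]
  apply Integrable.fintype_prod
    (f := fun i (v : ℝ) => (2 * π * ω i ^ 2) ^ (-(1 / 2) : ℝ) * Real.exp (-v ^ 2 / (2 * ω i ^ 2)))
  intro i
  apply Integrable.const_mul
  have hc := hω i
  have h1 := integrable_exp_neg_mul_sq (b := (2 * ω i ^ 2)⁻¹) (by positivity)
  apply h1.congr
  filter_upwards with v
  congr 1
  field_simp

lemma qprior_continuous {n : ℕ} (ω : Fin n → ℝ) :
    Continuous (fun x : EuclideanSpace ℝ (Fin n) => qprior ω x) := by
  unfold qprior
  apply continuous_finset_prod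
  intro i _
  exact continuous_const.mul
    ((((EuclideanSpace.proj i : EuclideanSpace ℝ (Fin n) →L[ℝ] ℝ).continuous.pow 2).neg.div_const
      _).rexp)

lemma plik_continuous {n : ℕ} (σ : Fin n → ℝ) (xb : EuclideanSpace ℝ (Fin n)) :
    Continuous (fun x : EuclideanSpace ℝ (Fin n) => plik σ xb x) := by
  unfold plik
  apply continuous_finset_prod
  intro i _
  exact continuous_const.mul
    ((((continuous_const.sub
      (EuclideanSpace.proj i : EuclideanSpace ℝ (Fin n) →L[ℝ] ℝ).continuous).pow 2).neg.div_const
      _).rexp)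

lemma log_plik {n : ℕ} (σ : Fin n → ℝ) (hσ : ∀ i, 0 < σ i) (xb x : EuclideanSpace ℝ (Fin n)) :
    Real.log (plik σ xb x)
      = (∑ i, Real.log ((2 * π * (σ i) ^ 2) ^ (-(1 / 2) : ℝ))) - γinn σ x xb / 2 := by
  unfold plik γinn
  rw [Real.log_prod]
  · rw [Finset.sum_div, ← Finset.sum_sub_distrib]
    apply Finset.sum_congr rfl
    intro i _
    have hσi := hσ i
    rw [Real.log_mul (by positivity) (by positivity), Real.log_exp]
    have : -(xb i - x i) ^ 2 / (2 * σ i ^ 2) = -((x i - xb i) ^ 2 / σ i ^ 2 / 2) := by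
      rw [neg_div]; congr 1; field_simp; ring
    rw [this]; ring
  · intro i _
    have hσi := hσ i
    positivity

lemma γinn_nonneg {n : ℕ} (σ : Fin n → ℝ) (x xb : EuclideanSpace ℝ (Fin n)) :
    0 ≤ γinn σ x xb :=
  Finset.sum_nonneg fun i _ => div_nonneg (sq_nonneg _) (sq_nonneg _)

/-- Time derivative of the conditional homotopy:
`∂ₜρ(x; x̄, t) = −(1/2)·ρ(x; x̄, t)·(γ(x, x̄) − γ̄(x̄, t))`. -/
theorem conditional_homotopy_time_derivative
    (n : ℕ) (hn : 1 ≤ n) (ω σ : Fin n → ℝ)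
    (hω : ∀ i, 0 < ω i) (hσ : ∀ i, 0 < σ i)
    (x xb : EuclideanSpace ℝ (Fin n)) (t : ℝ) (ht : t ∈ Set.Ioo (0 : ℝ) 1) :
    HasDerivAt (fun s => ρcond ω σ x xb s)
      (-(1 / 2) * ρcond ω σ x xb t * (γinn σ x xb - γbar ω σ xb t)) t := by
  obtain ⟨ht0, ht1⟩ := ht
  set L : ℝ := ∑ i, Real.log ((2 * π * (σ i) ^ 2) ^ (-(1 / 2) : ℝ)) with hLdef
  have hqpos := qprior_pos ω hω
  have hppos := plik_pos σ hσ xb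
  have hlogp : ∀ y : EuclideanSpace ℝ (Fin n),
      Real.log (plik σ xb y) = L - γinn σ y xb / 2 := log_plik σ hσ xb
  have hγ0 : ∀ y : EuclideanSpace ℝ (Fin n), 0 ≤ γinn σ y xb := fun y => γinn_nonneg σ y xb
  set F : ℝ → EuclideanSpace ℝ (Fin n) → ℝ := fun s y => Real.exp (fhom ω σ y xb s) with hFdef
  set F' : ℝ → EuclideanSpace ℝ (Fin n) → ℝ :=
    fun s y => Real.exp (fhom ω σ y xb s) * Real.log (plik σ xb y) with hF'def
  have hFeq : ∀ s (y : EuclideanSpace ℝ (Fin n)),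
      F s y = qprior ω y * Real.exp (s * (L - γinn σ y xb / 2)) := by
    intro s y
    rw [hFdef]
    simp only [fhom]
    rw [Real.exp_add, Real.exp_log (hqpos y), hlogp y]
  have hFpos : ∀ s (y : EuclideanSpace ℝ (Fin n)), 0 < F s y := fun s y => Real.exp_pos _
  -- continuity and measurability
  have hFcont : ∀ s, Continuous (F s) := by
    intro s
    rw [hFdef]
    simp only [fhom]
    exact (((qprior_continuous ω).log fun y => (hqpos y).ne').add
      (continuous_const.mul ((plik_continuous σ xb).log fun y => (hppos y).ne'))).rexp
  have hF'cont : ∀ s, Continuous (F' s) := by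
    intro s
    exact (hFcont s).mul ((plik_continuous σ xb).log fun y => (hppos y).ne')
  -- integrability of F t
  have hq_int := qprior_integrable ω hω
  have hFt_int : Integrable (F t) := by
    apply Integrable.mono' (hq_int.const_mul (Real.exp (t * L))) ((hFcont t).aestronglyMeasurable)
    filter_upwards with y
    rw [Real.norm_of_nonneg (hFpos t y).le, hFeq t y]
    have h1 : Real.exp (t * (L - γinn σ y xb / 2)) ≤ Real.exp (t * L) := by
      apply Real.exp_le_exp.2
      nlinarith [hγ0 y]
    calc qprior ω y * Real.exp (t * (L - γinn σ y xb / 2))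
        ≤ qprior ω y * Real.exp (t * L) :=
          mul_le_mul_of_nonneg_left h1 (hqpos y).le
      _ = Real.exp (t * L) * qprior ω y := by ring
  -- dominated differentiation of the normalization integral
  set bound : EuclideanSpace ℝ (Fin n) → ℝ :=
    fun y => Real.exp (2 * |L|) * (|L| + 2 / t) * qprior ω y with hbdef
  have hbound_int : Integrable bound := hq_int.const_mul _
  have h_bound : ∀ᵐ y : EuclideanSpace ℝ (Fin n), ∀ s ∈ Metric.ball t (t / 2),
      ‖F' s y‖ ≤ bound y := by
    filter_upwards with y
    intro s hs
    rw [Metric.mem_ball, Real.dist_eq] at hs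
    have hs1 : t / 2 < s := by cases abs_lt.1 hs; linarith
    have hs2 : s < 3 / 2 := by cases abs_lt.1 hs; linarith
    have hγ := hγ0 y
    have hsL : s * L ≤ 2 * |L| := by
      calc s * L ≤ |s * L| := le_abs_self _
        _ = |s| * |L| := abs_mul s L
        _ ≤ 2 * |L| := by
            apply mul_le_mul_of_nonneg_right _ (abs_nonneg L)
            rw [abs_of_pos (by linarith : (0:ℝ) < s)]; linarith
    have hA : Real.exp (s * L) ≤ Real.exp (2 * |L|) := Real.exp_le_exp.2 hsL
    have hB : Real.exp (-(s * (γinn σ y xb / 2))) ≤ Real.exp (-(t / 4 * γinn σ y xb)) := by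
      apply Real.exp_le_exp.2
      nlinarith
    have hB0 : Real.exp (-(t / 4 * γinn σ y xb)) ≤ 1 := by
      apply Real.exp_le_one_iff.2
      nlinarith [mul_nonneg ht0.le hγ]
    have hC : |Real.log (plik σ xb y)| ≤ |L| + γinn σ y xb / 2 := by
      rw [hlogp y]
      calc |L - γinn σ y xb / 2| ≤ |L| + |γinn σ y xb / 2| := by
            simpa [sub_eq_add_neg, abs_neg] using abs_add_le L (-(γinn σ y xb / 2))
        _ = |L| + γinn σ y xb / 2 := by
            rw [abs_of_nonneg (show (0:ℝ) ≤ γinn σ y xb / 2 by linarith)]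
    have hexp2 : γinn σ y xb * Real.exp (-(t / 4 * γinn σ y xb)) ≤ 4 / t := by
      have := aux_mul_exp_neg_le (a := t / 4) (u := γinn σ y xb) (by linarith)
      calc γinn σ y xb * Real.exp (-(t / 4 * γinn σ y xb)) ≤ 1 / (t / 4) := this
        _ = 4 / t := by rw [one_div_div]
    have hBC : Real.exp (-(s * (γinn σ y xb / 2))) * |Real.log (plik σ xb y)|
        ≤ |L| + 2 / t := by
      calc Real.exp (-(s * (γinn σ y xb / 2))) * |Real.log (plik σ xb y)|
          ≤ Real.exp (-(t / 4 * γinn σ y xb)) * (|L| + γinn σ y xb / 2) :=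
            mul_le_mul hB hC (abs_nonneg _) (Real.exp_pos _).le
        _ ≤ |L| + 2 / t := by
            nlinarith [mul_le_mul_of_nonneg_right hB0 (abs_nonneg L), hexp2,
              show (4:ℝ) / t = 2 * (2 / t) by ring]
    have hsplit : Real.exp (s * (L - γinn σ y xb / 2))
        = Real.exp (s * L) * Real.exp (-(s * (γinn σ y xb / 2))) := by
      rw [← Real.exp_add]; ring_nf
    rw [hF'def]
    simp only
    rw [Real.norm_eq_abs, abs_mul, abs_of_pos (Real.exp_pos _)]
    have : Real.exp (fhom ω σ y xb s) = F s y := rfl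
    rw [this, hFeq s y, hsplit, hbdef]
    calc qprior ω y * (Real.exp (s * L) * Real.exp (-(s * (γinn σ y xb / 2))))
          * |Real.log (plik σ xb y)|
        = qprior ω y * (Real.exp (s * L)
          * (Real.exp (-(s * (γinn σ y xb / 2))) * |Real.log (plik σ xb y)|)) := by ring
      _ ≤ qprior ω y * (Real.exp (2 * |L|) * (|L| + 2 / t)) := by
          apply mul_le_mul_of_nonneg_left _ (hqpos y).le
          apply mul_le_mul hA hBC (by positivity) (Real.exp_pos _).le
      _ = Real.exp (2 * |L|) * (|L| + 2 / t) * qprior ω y := by ring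
  have h_diff : ∀ᵐ y : EuclideanSpace ℝ (Fin n), ∀ s ∈ Metric.ball t (t / 2),
      HasDerivAt (fun u => F u y) (F' s y) s := by
    filter_upwards with y
    intro s _
    have h1 : HasDerivAt (fun u : ℝ => Real.log (qprior ω y) + u * Real.log (plik σ xb y))
        (Real.log (plik σ xb y)) s :=
      ((hasDerivAt_mul_const (Real.log (plik σ xb y))).const_add _)
    exact h1.exp
  obtain ⟨hF't_int, hZd⟩ := hasDerivAt_integral_of_dominated_loc_of_deriv_le
    (F := F) (F' := F') (bound := bound) (Metric.ball_mem_nhds t (half_pos ht0))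
    (Filter.Eventually.of_forall fun s => (hFcont s).aestronglyMeasurable)
    hFt_int ((hF'cont t).aestronglyMeasurable) h_bound hbound_int h_diff
  -- positivity of the normalization
  set Z : ℝ := ∫ y, F t y with hZdef
  have hZpos : 0 < Z := by
    rw [hZdef, integral_pos_iff_support_of_nonneg (fun y => (hFpos t y).le) hFt_int]
    have hsupp : Function.support (F t) = Set.univ :=
      Set.eq_univ_of_forall fun y => (hFpos t y).ne'
    rw [hsupp]
    exact isOpen_univ.measure_pos volume Set.univ_nonempty
  -- value of the derivative of the normalization integral
  set I : ℝ := ∫ y, F t y * γinn σ y xb with hIdef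
  have hFγ_int : Integrable (fun y => F t y * γinn σ y xb) := by
    have heq : (fun y : EuclideanSpace ℝ (Fin n) => F t y * γinn σ y xb)
        = fun y => (L * F t y - F' t y) * 2 := by
      funext y
      rw [hF'def]
      simp only
      have h0 : Real.exp (fhom ω σ y xb t) = F t y := rfl
      rw [h0, hlogp y]; ring
    rw [heq]
    exact ((hFt_int.const_mul L).sub hF't_int).mul_const 2
  have hZ'val : (∫ y, F' t y) = L * Z - I / 2 := by
    have heq : (fun y : EuclideanSpace ℝ (Fin n) => F' t y)
        = fun y => L * F t y - F t y * γinn σ y xb / 2 := by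
      funext y
      rw [hF'def]
      simp only
      have h0 : Real.exp (fhom ω σ y xb t) = F t y := rfl
      rw [h0, hlogp y]; ring
    rw [heq, integral_sub (hFt_int.const_mul L) (hFγ_int.div_const 2),
      integral_const_mul, integral_div]
  have hγbar : γbar ω σ xb t = I / Z := by
    rw [hIdef]
    unfold γbar ρcond
    rw [← integral_div]
    apply integral_congr_ae
    filter_upwards with y
    rw [div_mul_eq_mul_div]
  -- derivative of the numerator
  have hN : HasDerivAt (fun s => F s x) (F' t x) t := by
    have h1 : HasDerivAt (fun u : ℝ => Real.log (qprior ω x) + u * Real.log (plik σ xb x))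
        (Real.log (plik σ xb x)) t :=
      ((hasDerivAt_mul_const (Real.log (plik σ xb x))).const_add _)
    exact h1.exp
  -- assemble via the quotient rule
  have hd := hN.div hZd hZpos.ne'
  rw [← hZdef, hZ'val] at hd
  have hval : (F' t x * Z - F t x * (L * Z - I / 2)) / Z ^ 2
      = -(1 / 2) * ρcond ω σ x xb t * (γinn σ x xb - γbar ω σ xb t) := by
    rw [hγbar]
    have hρ : ρcond ω σ x xb t = F t x / Z := rfl
    have hF'x : F' t x = F t x * (L - γinn σ x xb / 2) := by
      rw [hF'def]
      simp only
      rw [hlogp x]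
    rw [hρ, hF'x]
    field_simp
    ring
  rw [hval] at hd
  exact hd
end
end

section
/- Let Φ : ℝⁿ × (0,1) → ℝ be such that for each t ∈ (0,1) the function x ↦ Φ(x, t) is twice continuously differentiable, and suppose Φ solves the probabilistic Poisson equation at every time: for all x ∈ ℝⁿ and t ∈ (0,1), ∇ₓ·(ρ̄(x; t)·∇ₓΦ(x, t)) = (1/2)·∫_{ℝⁿ} ρ(x; x̄, t)·(γ(x, x̄) − γ̄(x̄, t)) dP_data(x̄). Then the data likelihood homotopy solves the continuity (Fokker–Planck) equation driven by the potential flow: for all x ∈ ℝⁿ and t ∈ (0,1), ∂ₜρ̄(x; t) + ∇ₓ·(ρ̄(x; t)·∇ₓΦ(x, t)) = 0. -/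
open MeasureTheory Real Set
open scoped RealInnerProductSpace

noncomputable section

/-- Data likelihood homotopy `ρ̄(x; t) = ∫ ρ(x; x̄, t) dP_data(x̄)`. -/
def ρbar {n : ℕ} (ω σ : Fin n → ℝ) (μ : Measure (EuclideanSpace ℝ (Fin n)))
    (x : EuclideanSpace ℝ (Fin n)) (t : ℝ) : ℝ :=
  ∫ xb, ρcond ω σ x xb t ∂μ

/-- Source term `h(x, t) = ∫ ρ(x; x̄, t)·(γ(x, x̄) − γ̄(x̄, t)) dP_data(x̄)`. -/
def hsrc {n : ℕ} (ω σ : Fin n → ℝ) (μ : Measure (EuclideanSpace ℝ (Fin n)))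
    (x : EuclideanSpace ℝ (Fin n)) (t : ℝ) : ℝ :=
  ∫ xb, ρcond ω σ x xb t * (γinn σ x xb - γbar ω σ xb t) ∂μ

/-- Laplacian `ΔΦ(x) = ∑ᵢ ∂²Φ/∂xᵢ²` on Euclidean space. -/
def lap {n : ℕ} (Φ : EuclideanSpace ℝ (Fin n) → ℝ) (x : EuclideanSpace ℝ (Fin n)) : ℝ :=
  ∑ i, fderiv ℝ (fun y => fderiv ℝ Φ y (EuclideanSpace.single i (1 : ℝ))) x
    (EuclideanSpace.single i (1 : ℝ))

namespace P2
variable {n : ℕ} {ω σ : Fin n → ℝ}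

/-- normalizing constant -/
def Cst (σ : Fin n → ℝ) : ℝ := ∏ i, (2 * π * σ i ^ 2) ^ (-(1 / 2) : ℝ)

lemma Cst_pos (hσ : ∀ i, 0 < σ i) : 0 < Cst σ :=
  Finset.prod_pos fun i _ => Real.rpow_pos_of_pos (by have := hσ i; positivity) _

/-- weighted square norm for the prior -/
def Sq (ω : Fin n → ℝ) (x : EuclideanSpace ℝ (Fin n)) : ℝ := ∑ i, (x i) ^ 2 / (2 * ω i ^ 2)

lemma qprior_eq (x : EuclideanSpace ℝ (Fin n)) :
    qprior ω x = Cst ω * Real.exp (-(Sq ω x)) := by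
  rw [qprior, Cst, Sq, Finset.prod_mul_distrib, ← Real.exp_sum]
  congr 1
  simp [neg_div, Finset.sum_neg_distrib]

lemma plik_eq (xb x : EuclideanSpace ℝ (Fin n)) :
    plik σ xb x = Cst σ * Real.exp (-(γinn σ x xb) / 2) := by
  rw [plik, Cst, γinn, Finset.prod_mul_distrib, ← Real.exp_sum]
  congr 1
  have h : ∀ i, -(xb i - x i) ^ 2 / (2 * σ i ^ 2) = -((x i - xb i) ^ 2 / σ i ^ 2) / 2 := by
    intro i; ring
  simp only [h]
  rw [← Finset.sum_div, Finset.sum_neg_distrib]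

lemma plik_pos (hσ : ∀ i, 0 < σ i) (xb x : EuclideanSpace ℝ (Fin n)) : 0 < plik σ xb x := by
  rw [plik_eq]; exact mul_pos (Cst_pos hσ) (Real.exp_pos _)

lemma qprior_pos (hω : ∀ i, 0 < ω i) (x : EuclideanSpace ℝ (Fin n)) : 0 < qprior ω x := by
  rw [qprior_eq]; exact mul_pos (Cst_pos hω) (Real.exp_pos _)

lemma log_plik (hσ : ∀ i, 0 < σ i) (xb x : EuclideanSpace ℝ (Fin n)) :
    Real.log (plik σ xb x) = Real.log (Cst σ) - γinn σ x xb / 2 := by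
  rw [plik_eq, Real.log_mul (Cst_pos hσ).ne' (Real.exp_pos _).ne', Real.log_exp, neg_div,
    sub_eq_add_neg]

lemma fhom_eq (hω : ∀ i, 0 < ω i) (hσ : ∀ i, 0 < σ i) (x xb : EuclideanSpace ℝ (Fin n)) (t : ℝ) :
    fhom ω σ x xb t = (Real.log (Cst ω) - Sq ω x) + t * (Real.log (Cst σ) - γinn σ x xb / 2) := by
  rw [fhom, log_plik hσ, qprior_eq, Real.log_mul (Cst_pos hω).ne' (Real.exp_pos _).ne',
    Real.log_exp]
  ring


lemma norm_sq_eq (x : EuclideanSpace ℝ (Fin n)) : ‖x‖ ^ 2 = ∑ i, x i ^ 2 := by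
  rw [EuclideanSpace.norm_eq, Real.sq_sqrt (by positivity)]
  simp [sq_abs]

lemma coord_sq_le (x : EuclideanSpace ℝ (Fin n)) (i : Fin n) : x i ^ 2 ≤ ‖x‖ ^ 2 := by
  rw [norm_sq_eq]
  exact Finset.single_le_sum (f := fun j => x j ^ 2) (fun j _ => sq_nonneg _) (Finset.mem_univ i)

lemma γinn_nonneg (x xb : EuclideanSpace ℝ (Fin n)) : 0 ≤ γinn σ x xb :=
  Finset.sum_nonneg fun i _ => by positivity

lemma γinn_le (x xb : EuclideanSpace ℝ (Fin n)) :
    γinn σ x xb ≤ (∑ i, (σ i ^ 2)⁻¹) * (2 * ‖x‖ ^ 2 + 2 * ‖xb‖ ^ 2) := by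
  rw [γinn, Finset.sum_mul]
  refine Finset.sum_le_sum fun i _ => ?_
  rw [div_eq_inv_mul]
  refine mul_le_mul_of_nonneg_left ?_ (by positivity)
  nlinarith [coord_sq_le x i, coord_sq_le xb i, sq_nonneg (x i + xb i)]

lemma Sq_ge (hω : ∀ i, 0 < ω i) (hn : 1 ≤ n) (x : EuclideanSpace ℝ (Fin n)) :
    (∑ i, 2 * ω i ^ 2)⁻¹ * ‖x‖ ^ 2 ≤ Sq ω x := by
  rw [norm_sq_eq, Finset.mul_sum, Sq]
  refine Finset.sum_le_sum fun i _ => ?_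
  rw [div_eq_inv_mul]
  refine mul_le_mul_of_nonneg_right ?_ (sq_nonneg _)
  have h1 : (0:ℝ) < 2 * ω i ^ 2 := by have := hω i; positivity
  exact inv_anti₀ h1
    (Finset.single_le_sum (f := fun j => 2 * ω j ^ 2)
      (fun j _ => by have := hω j; positivity) (Finset.mem_univ i))

lemma sum_two_omega_pos (hω : ∀ i, 0 < ω i) (hn : 1 ≤ n) : (0:ℝ) < ∑ i, 2 * ω i ^ 2 := by
  haveI : Nonempty (Fin n) := Fin.pos_iff_nonempty.mp hn
  exact Finset.sum_pos (fun i _ => by have := hω i; positivity) Finset.univ_nonempty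

lemma exp_mul_le {t L : ℝ} (ht : t ∈ Icc (0:ℝ) 1) : Real.exp (t * L) ≤ max 1 (Real.exp L) := by
  rcases le_or_gt L 0 with h | h
  · exact le_max_of_le_left (Real.exp_le_one_iff.mpr (by nlinarith [ht.1]))
  · exact le_max_of_le_right (Real.exp_le_exp.mpr
      (by nlinarith [ht.1, ht.2]))

lemma le_exp_mul {t L : ℝ} (ht : t ∈ Icc (0:ℝ) 1) : min 1 (Real.exp L) ≤ Real.exp (t * L) := by
  rcases le_or_gt L 0 with h | h
  · exact le_trans (min_le_right _ _) (Real.exp_le_exp.mpr (by nlinarith [ht.1, ht.2]))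
  · exact le_trans (min_le_left _ _) (Real.one_le_exp (mul_nonneg ht.1 h.le))

lemma integrable_gauss (a : ℝ) (ha : 0 < a) :
    Integrable (fun y : EuclideanSpace ℝ (Fin n) => Real.exp (-a * ‖y‖ ^ 2)) := by
  have h := (GaussianFourier.integrable_cexp_neg_mul_sq_norm_add
    (V := EuclideanSpace ℝ (Fin n)) (b := (a : ℂ)) (by simpa) 0 0).norm
  refine h.congr (Filter.Eventually.of_forall fun y => ?_)
  simp [Complex.norm_exp]
  exact Or.inl (by rw [← Complex.ofReal_pow, Complex.ofReal_re])

lemma integrable_poly_gauss (a c d : ℝ) (ha : 0 < a) :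
    Integrable (fun y : EuclideanSpace ℝ (Fin n) =>
      (c + d * ‖y‖ ^ 2) * Real.exp (-a * ‖y‖ ^ 2)) := by
  refine Integrable.mono' ((integrable_gauss (a / 2) (half_pos ha)).const_mul
    (|c| + 2 * |d| / a)) ?_ (Filter.Eventually.of_forall fun y => ?_)
  · exact (Continuous.mul (by continuity) (by continuity)).aestronglyMeasurable
  · set s := ‖y‖ ^ 2 with hs
    have hs0 : 0 ≤ s := sq_nonneg _
    rw [Real.norm_eq_abs, abs_mul, Real.abs_exp]
    have h1 : |c + d * s| ≤ |c| + |d| * s := by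
      calc |c + d * s| ≤ |c| + |d * s| := abs_add_le _ _
      _ = |c| + |d| * s := by rw [abs_mul, abs_of_nonneg hs0]
    have key : (|c| + |d| * s) * Real.exp (-a * s) ≤
        (|c| + 2 * |d| / a) * Real.exp (-(a / 2) * s) := by
      have e1 : Real.exp (-a * s) = Real.exp (-(a / 2) * s) * Real.exp (-(a / 2) * s) := by
        rw [← Real.exp_add]; ring_nf
      have h2 : Real.exp (-(a / 2) * s) ≤ 1 := Real.exp_le_one_iff.mpr (by nlinarith)
      have h3 : (a / 2 * s) * Real.exp (-(a / 2) * s) ≤ 1 := by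
        have := Real.add_one_le_exp (a / 2 * s)
        have h4 : Real.exp (-(a / 2) * s) = (Real.exp (a / 2 * s))⁻¹ := by
          rw [← Real.exp_neg]; ring_nf
        rw [h4]
        have h5 : (0:ℝ) < Real.exp (a / 2 * s) := Real.exp_pos _
        rw [mul_inv_le_iff₀ h5, one_mul]
        nlinarith
      have h6 : |d| * s * Real.exp (-(a / 2) * s) ≤ 2 * |d| / a := by
        have h7 : (0:ℝ) ≤ |d| := abs_nonneg d
        have : |d| * s * Real.exp (-(a / 2) * s) = (2 * |d| / a) * ((a / 2 * s) * Real.exp (-(a / 2) * s)) := by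
          field_simp
        rw [this]
        exact mul_le_of_le_one_right (by positivity) h3
      have h8 : |c| * Real.exp (-(a / 2) * s) ≤ |c| := by
        nlinarith [abs_nonneg c]
      calc (|c| + |d| * s) * Real.exp (-a * s)
          = (|c| * Real.exp (-(a/2)*s) + |d| * s * Real.exp (-(a/2)*s)) * Real.exp (-(a/2)*s) := by
            rw [e1]; ring
        _ ≤ (|c| + 2 * |d| / a) * Real.exp (-(a / 2) * s) := by
            refine mul_le_mul_of_nonneg_right ?_ (Real.exp_pos _).le
            exact add_le_add h8 h6
    calc |c + d * s| * Real.exp (-a * s) ≤ (|c| + |d| * s) * Real.exp (-a * s) :=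
          mul_le_mul_of_nonneg_right h1 (Real.exp_pos _).le
      _ ≤ (|c| + 2 * |d| / a) * Real.exp (-(a / 2) * s) := key

variable (ω σ) in
/-- numerator -/
def Ee (x xb : EuclideanSpace ℝ (Fin n)) (t : ℝ) : ℝ := Real.exp (fhom ω σ x xb t)

variable (ω σ) in
/-- partition function -/
def Zz (xb : EuclideanSpace ℝ (Fin n)) (t : ℝ) : ℝ := ∫ y, Ee ω σ y xb t

variable (ω) in
def a0 : ℝ := (∑ i, 2 * ω i ^ 2)⁻¹

variable (σ) in
def Mp : ℝ := max 1 (Cst σ)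

variable (σ) in
def Sσ : ℝ := ∑ i, (σ i ^ 2)⁻¹

lemma a0_pos (hω : ∀ i, 0 < ω i) (hn : 1 ≤ n) : 0 < a0 ω :=
  inv_pos.mpr (sum_two_omega_pos hω hn)

lemma Mp_pos (hσ : ∀ i, 0 < σ i) : 0 < Mp σ := lt_of_lt_of_le one_pos (le_max_left _ _)

lemma Sσ_nonneg : 0 ≤ Sσ σ := Finset.sum_nonneg fun i _ => by positivity

lemma E_eq (hω : ∀ i, 0 < ω i) (hσ : ∀ i, 0 < σ i) (x xb : EuclideanSpace ℝ (Fin n)) (t : ℝ) :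
    Ee ω σ x xb t = qprior ω x * Real.exp (t * (Real.log (Cst σ) - γinn σ x xb / 2)) := by
  rw [Ee, fhom, Real.exp_add, Real.exp_log (qprior_pos hω x), log_plik hσ]

lemma E_pos (hω : ∀ i, 0 < ω i) (hσ : ∀ i, 0 < σ i) (x xb : EuclideanSpace ℝ (Fin n)) (t : ℝ) :
    0 < Ee ω σ x xb t := Real.exp_pos _

lemma plik_le (hσ : ∀ i, 0 < σ i) (xb x : EuclideanSpace ℝ (Fin n)) : plik σ xb x ≤ Cst σ := by
  rw [plik_eq]
  nth_rewrite 2 [← mul_one (Cst σ)]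
  exact mul_le_mul_of_nonneg_left
    (Real.exp_le_one_iff.mpr (by nlinarith [γinn_nonneg (σ := σ) x xb]))
    (Cst_pos hσ).le

lemma exp_t_log_le (hσ : ∀ i, 0 < σ i) {t : ℝ} (ht : t ∈ Icc (0:ℝ) 1)
    (x xb : EuclideanSpace ℝ (Fin n)) :
    Real.exp (t * (Real.log (Cst σ) - γinn σ x xb / 2)) ≤ Mp σ := by
  have h1 := exp_mul_le (L := Real.log (Cst σ) - γinn σ x xb / 2) ht
  refine h1.trans (max_le_max le_rfl ?_)
  rw [← log_plik hσ xb x, Real.exp_log (plik_pos hσ xb x)]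
  exact plik_le hσ xb x

lemma qprior_le (hω : ∀ i, 0 < ω i) (hn : 1 ≤ n) (x : EuclideanSpace ℝ (Fin n)) :
    qprior ω x ≤ Cst ω * Real.exp (-(a0 ω) * ‖x‖ ^ 2) := by
  rw [qprior_eq]
  refine mul_le_mul_of_nonneg_left (Real.exp_le_exp.mpr ?_) (Cst_pos hω).le
  have := Sq_ge hω hn x
  rw [a0]; linarith

lemma E_le (hω : ∀ i, 0 < ω i) (hσ : ∀ i, 0 < σ i) (hn : 1 ≤ n) {t : ℝ}
    (ht : t ∈ Icc (0:ℝ) 1) (x xb : EuclideanSpace ℝ (Fin n)) :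
    Ee ω σ x xb t ≤ (Cst ω * Mp σ) * Real.exp (-(a0 ω) * ‖x‖ ^ 2) := by
  rw [E_eq hω hσ]
  calc qprior ω x * Real.exp (t * (Real.log (Cst σ) - γinn σ x xb / 2))
      ≤ qprior ω x * Mp σ :=
        mul_le_mul_of_nonneg_left (exp_t_log_le hσ ht x xb) (qprior_pos hω x).le
    _ ≤ (Cst ω * Real.exp (-(a0 ω) * ‖x‖ ^ 2)) * Mp σ :=
        mul_le_mul_of_nonneg_right (qprior_le hω hn x) (Mp_pos hσ).le
    _ = (Cst ω * Mp σ) * Real.exp (-(a0 ω) * ‖x‖ ^ 2) := by ring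

lemma continuous_coord (i : Fin n) : Continuous fun x : EuclideanSpace ℝ (Fin n) => x i :=
  (EuclideanSpace.proj (𝕜 := ℝ) i).continuous

lemma continuous_Sq : Continuous (Sq ω) :=
  continuous_finset_sum _ fun i _ => ((continuous_coord i).pow 2).div_const _

lemma continuous_γinn_pair :
    Continuous fun p : EuclideanSpace ℝ (Fin n) × EuclideanSpace ℝ (Fin n) =>
      γinn σ p.2 p.1 :=
  continuous_finset_sum _ fun i _ =>
    ((((continuous_coord i).comp continuous_snd).sub
      ((continuous_coord i).comp continuous_fst)).pow 2).div_const _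

lemma continuous_E_pair (hω : ∀ i, 0 < ω i) (hσ : ∀ i, 0 < σ i) (t : ℝ) :
    Continuous fun p : EuclideanSpace ℝ (Fin n) × EuclideanSpace ℝ (Fin n) =>
      Ee ω σ p.2 p.1 t := by
  have : ∀ p : EuclideanSpace ℝ (Fin n) × EuclideanSpace ℝ (Fin n),
      Ee ω σ p.2 p.1 t = Real.exp ((Real.log (Cst ω) - Sq ω p.2) +
        t * (Real.log (Cst σ) - γinn σ p.2 p.1 / 2)) := by
    intro p; rw [Ee, fhom_eq hω hσ]
  simp only [this]
  exact (((continuous_const.sub (continuous_Sq.comp continuous_snd)).add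
    (continuous_const.mul (continuous_const.sub (continuous_γinn_pair.div_const 2)))).rexp)

lemma continuous_E_y (hω : ∀ i, 0 < ω i) (hσ : ∀ i, 0 < σ i)
    (xb : EuclideanSpace ℝ (Fin n)) (t : ℝ) :
    Continuous fun y : EuclideanSpace ℝ (Fin n) => Ee ω σ y xb t := by
  have h : ∀ y, Ee ω σ y xb t = Real.exp ((Real.log (Cst ω) - Sq ω y) +
      t * (Real.log (Cst σ) - γinn σ y xb / 2)) := by
    intro y; rw [Ee, fhom_eq hω hσ]
  simp only [h]
  refine Continuous.rexp ?_
  refine (continuous_const.sub continuous_Sq).add (continuous_const.mul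
    (continuous_const.sub (Continuous.div_const ?_ 2)))
  exact continuous_finset_sum _ fun i _ =>
    (((continuous_coord i).sub continuous_const).pow 2).div_const _

lemma integrable_E (hω : ∀ i, 0 < ω i) (hσ : ∀ i, 0 < σ i) (hn : 1 ≤ n) {t : ℝ}
    (ht : t ∈ Icc (0:ℝ) 1) (xb : EuclideanSpace ℝ (Fin n)) :
    Integrable (fun y => Ee ω σ y xb t) := by
  refine Integrable.mono' (integrable_poly_gauss (a0 ω) (Cst ω * Mp σ) 0 (a0_pos hω hn))
    (continuous_E_y hω hσ xb t).aestronglyMeasurable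
    (Filter.Eventually.of_forall fun y => ?_)
  rw [Real.norm_eq_abs, abs_of_pos (E_pos hω hσ y xb t), zero_mul, add_zero]
  exact E_le hω hσ hn ht y xb

lemma Z_pos (hω : ∀ i, 0 < ω i) (hσ : ∀ i, 0 < σ i) (hn : 1 ≤ n) {t : ℝ}
    (ht : t ∈ Icc (0:ℝ) 1) (xb : EuclideanSpace ℝ (Fin n)) : 0 < Zz ω σ xb t := by
  rw [Zz]
  rw [integral_pos_iff_support_of_nonneg (fun y => (E_pos hω hσ y xb t).le)
    (integrable_E hω hσ hn ht xb)]
  have : Function.support (fun y => Ee ω σ y xb t) = Set.univ := by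
    ext y; simp [Function.mem_support, (E_pos hω hσ y xb t).ne']
  rw [this]
  simpa using (NeZero.ne (volume : Measure (EuclideanSpace ℝ (Fin n)))) 

lemma Sq_le (x : EuclideanSpace ℝ (Fin n)) :
    Sq ω x ≤ (∑ i, (2 * ω i ^ 2)⁻¹) * ‖x‖ ^ 2 := by
  rw [Sq, Finset.sum_mul]
  refine Finset.sum_le_sum fun i _ => ?_
  rw [div_eq_inv_mul]
  exact mul_le_mul_of_nonneg_left (coord_sq_le x i) (by positivity)

variable (ω σ) in
/-- uniform lower bound for the partition function over `‖xb‖ ≤ R`, `t ∈ [0,1]` -/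
def Zmin (R : ℝ) : ℝ :=
  (Cst ω * Real.exp (-(∑ i, (2 * ω i ^ 2)⁻¹)) *
    min 1 (Cst σ * Real.exp (-(Sσ σ * (1 + R ^ 2))))) *
    (volume (Metric.closedBall (0 : EuclideanSpace ℝ (Fin n)) 1)).toReal

lemma Zmin_pos (hω : ∀ i, 0 < ω i) (hσ : ∀ i, 0 < σ i) (R : ℝ) : 0 < Zmin ω σ R := by
  refine mul_pos (mul_pos (mul_pos (Cst_pos hω) (Real.exp_pos _))
    (lt_min one_pos (mul_pos (Cst_pos hσ) (Real.exp_pos _)))) ?_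
  refine ENNReal.toReal_pos ?_ ?_
  · exact (Metric.measure_closedBall_pos volume 0 one_pos).ne'
  · exact (IsCompact.measure_lt_top (isCompact_closedBall _ _)).ne

lemma E_ge_on_ball (hω : ∀ i, 0 < ω i) (hσ : ∀ i, 0 < σ i) {t R : ℝ}
    (ht : t ∈ Icc (0:ℝ) 1) {xb y : EuclideanSpace ℝ (Fin n)} (hxb : ‖xb‖ ≤ R) (hy : ‖y‖ ≤ 1) :
    Cst ω * Real.exp (-(∑ i, (2 * ω i ^ 2)⁻¹)) *
      min 1 (Cst σ * Real.exp (-(Sσ σ * (1 + R ^ 2)))) ≤ Ee ω σ y xb t := by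
  have hR0 : 0 ≤ R := le_trans (norm_nonneg _) hxb
  rw [E_eq hω hσ]
  have h1 : Cst ω * Real.exp (-(∑ i, (2 * ω i ^ 2)⁻¹)) ≤ qprior ω y := by
    rw [qprior_eq]
    refine mul_le_mul_of_nonneg_left (Real.exp_le_exp.mpr (neg_le_neg ?_)) (Cst_pos hω).le
    refine (Sq_le y).trans ?_
    have h2 : ‖y‖ ^ 2 ≤ 1 := by nlinarith [norm_nonneg y]
    nlinarith [Finset.sum_nonneg (fun i (_ : i ∈ Finset.univ) =>
      inv_nonneg.mpr (by positivity : (0:ℝ) ≤ 2 * ω i ^ 2))]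
  have h3 : min 1 (Cst σ * Real.exp (-(Sσ σ * (1 + R ^ 2)))) ≤
      Real.exp (t * (Real.log (Cst σ) - γinn σ y xb / 2)) := by
    refine le_trans ?_ (le_exp_mul ht)
    refine min_le_min le_rfl ?_
    rw [← log_plik hσ xb y, Real.exp_log (plik_pos hσ xb y), plik_eq]
    refine mul_le_mul_of_nonneg_left (Real.exp_le_exp.mpr ?_) (Cst_pos hσ).le
    rw [neg_div, neg_le_neg_iff]
    have h4 : γinn σ y xb ≤ Sσ σ * (2 * ‖y‖ ^ 2 + 2 * ‖xb‖ ^ 2) := by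
      have := γinn_le (σ := σ) y xb; rw [Sσ]; linarith
    have h5 : ‖y‖ ^ 2 ≤ 1 := by nlinarith [norm_nonneg y]
    have h6 : ‖xb‖ ^ 2 ≤ R ^ 2 := by nlinarith [norm_nonneg xb]
    have h7 : 0 ≤ Sσ σ := Sσ_nonneg
    nlinarith
  calc Cst ω * Real.exp (-(∑ i, (2 * ω i ^ 2)⁻¹)) *
        min 1 (Cst σ * Real.exp (-(Sσ σ * (1 + R ^ 2))))
      ≤ qprior ω y * Real.exp (t * (Real.log (Cst σ) - γinn σ y xb / 2)) := by
        refine mul_le_mul h1 h3 ?_ (qprior_pos hω y).le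
        exact le_min (by norm_num) (mul_pos (Cst_pos hσ) (Real.exp_pos _)).le

lemma Z_ge (hω : ∀ i, 0 < ω i) (hσ : ∀ i, 0 < σ i) (hn : 1 ≤ n) {t R : ℝ}
    (ht : t ∈ Icc (0:ℝ) 1) {xb : EuclideanSpace ℝ (Fin n)} (hxb : ‖xb‖ ≤ R) :
    Zmin ω σ R ≤ Zz ω σ xb t := by
  set B := Metric.closedBall (0 : EuclideanSpace ℝ (Fin n)) 1
  have hint := integrable_E hω hσ hn ht xb
  have h1 : Zmin ω σ R ≤ ∫ y in B, Ee ω σ y xb t := by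
    rw [Zmin]
    refine setIntegral_ge_of_const_le_real measurableSet_closedBall
      (IsCompact.measure_lt_top (isCompact_closedBall _ _)).ne
      (fun y hy => E_ge_on_ball hω hσ ht hxb (by simpa [B, Metric.mem_closedBall] using hy))
      hint.integrableOn
  refine h1.trans (setIntegral_le_integral hint
    (Filter.Eventually.of_forall fun y => (E_pos hω hσ y xb t).le))

lemma E_mul_abs_le (hω : ∀ i, 0 < ω i) (hσ : ∀ i, 0 < σ i) (hn : 1 ≤ n) {s : ℝ}
    (hs : s ∈ Icc (0:ℝ) 1) (xb y : EuclideanSpace ℝ (Fin n)) {g cg dg : ℝ}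
    (hb : |g| ≤ cg + dg * ‖y‖ ^ 2) :
    |Ee ω σ y xb s * g| ≤
      (Cst ω * Mp σ * cg + Cst ω * Mp σ * dg * ‖y‖ ^ 2) * Real.exp (-(a0 ω) * ‖y‖ ^ 2) := by
  have hE := E_le hω hσ hn hs y xb
  have hE0 := (E_pos hω hσ y xb s).le
  have habs : (0:ℝ) ≤ cg + dg * ‖y‖ ^ 2 := le_trans (abs_nonneg g) hb
  rw [abs_mul, abs_of_nonneg hE0]
  calc Ee ω σ y xb s * |g| ≤ ((Cst ω * Mp σ) * Real.exp (-(a0 ω) * ‖y‖ ^ 2)) *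
        (cg + dg * ‖y‖ ^ 2) := mul_le_mul hE hb (abs_nonneg g)
          (mul_pos (mul_pos (Cst_pos hω) (Mp_pos hσ)) (Real.exp_pos _)).le
    _ = (Cst ω * Mp σ * cg + Cst ω * Mp σ * dg * ‖y‖ ^ 2) * Real.exp (-(a0 ω) * ‖y‖ ^ 2) := by
        ring

lemma integrable_E_mul (hω : ∀ i, 0 < ω i) (hσ : ∀ i, 0 < σ i) (hn : 1 ≤ n) {t : ℝ}
    (ht : t ∈ Icc (0:ℝ) 1) (xb : EuclideanSpace ℝ (Fin n)) {g : EuclideanSpace ℝ (Fin n) → ℝ}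
    (hg : Continuous g) {cg dg : ℝ} (hb : ∀ y, |g y| ≤ cg + dg * ‖y‖ ^ 2) :
    Integrable (fun y => Ee ω σ y xb t * g y) := by
  refine Integrable.mono'
    (integrable_poly_gauss (a0 ω) (Cst ω * Mp σ * cg) (Cst ω * Mp σ * dg) (a0_pos hω hn))
    ((continuous_E_y hω hσ xb t).mul hg).aestronglyMeasurable
    (Filter.Eventually.of_forall fun y => ?_)
  rw [Real.norm_eq_abs]
  have := E_mul_abs_le hω hσ hn ht xb y (hb y)
  calc |Ee ω σ y xb t * g y| ≤
      (Cst ω * Mp σ * cg + Cst ω * Mp σ * dg * ‖y‖ ^ 2) * Real.exp (-(a0 ω) * ‖y‖ ^ 2) := this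
    _ = (Cst ω * Mp σ * cg + Cst ω * Mp σ * dg * ‖y‖ ^ 2) * Real.exp (-(a0 ω) * ‖y‖ ^ 2) := rfl

lemma abs_γinn_le (hσ : ∀ i, 0 < σ i) (xb y : EuclideanSpace ℝ (Fin n)) :
    |γinn σ y xb| ≤ 2 * Sσ σ * ‖xb‖ ^ 2 + 2 * Sσ σ * ‖y‖ ^ 2 := by
  rw [abs_of_nonneg (γinn_nonneg y xb)]
  have := γinn_le (σ := σ) y xb
  rw [Sσ]; nlinarith [Sσ_nonneg (σ := σ), norm_nonneg y, norm_nonneg xb]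

lemma abs_lin_le (hσ : ∀ i, 0 < σ i) (xb y : EuclideanSpace ℝ (Fin n)) :
    |Real.log (Cst σ) - γinn σ y xb / 2| ≤
      (|Real.log (Cst σ)| + Sσ σ * ‖xb‖ ^ 2) + Sσ σ * ‖y‖ ^ 2 := by
  have h1 := abs_γinn_le hσ xb y
  have h2 : |Real.log (Cst σ) - γinn σ y xb / 2| ≤
      |Real.log (Cst σ)| + |γinn σ y xb| / 2 := by
    calc |Real.log (Cst σ) - γinn σ y xb / 2| ≤
        |Real.log (Cst σ)| + |γinn σ y xb / 2| := abs_sub _ _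
      _ = |Real.log (Cst σ)| + |γinn σ y xb| / 2 := by rw [abs_div, abs_two]
  linarith

lemma integrable_E_mul_γ (hω : ∀ i, 0 < ω i) (hσ : ∀ i, 0 < σ i) (hn : 1 ≤ n) {t : ℝ}
    (ht : t ∈ Icc (0:ℝ) 1) (xb : EuclideanSpace ℝ (Fin n)) :
    Integrable (fun y => Ee ω σ y xb t * γinn σ y xb) := by
  refine integrable_E_mul hω hσ hn ht xb ?_ (cg := 2 * Sσ σ * ‖xb‖ ^ 2) (dg := 2 * Sσ σ)
    (fun y => by simpa [mul_assoc] using abs_γinn_le hσ xb y)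
  have h : (fun y : EuclideanSpace ℝ (Fin n) => γinn σ y xb) =
      fun y => ∑ i, (y i - xb i) ^ 2 / σ i ^ 2 := by ext y; rw [γinn]
  rw [h]
  exact continuous_finset_sum _ fun i _ =>
    (((continuous_coord i).sub continuous_const).pow 2).div_const _

lemma continuous_lin (hσ : ∀ i, 0 < σ i) (xb : EuclideanSpace ℝ (Fin n)) :
    Continuous (fun y => Real.log (Cst σ) - γinn σ y xb / 2) := by
  have h : (fun y : EuclideanSpace ℝ (Fin n) => γinn σ y xb) =
      fun y => ∑ i, (y i - xb i) ^ 2 / σ i ^ 2 := by ext y; rw [γinn]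
  refine continuous_const.sub (Continuous.div_const ?_ 2)
  rw [h]
  exact continuous_finset_sum _ fun i _ =>
    (((continuous_coord i).sub continuous_const).pow 2).div_const _

lemma integrable_E_mul_lin (hω : ∀ i, 0 < ω i) (hσ : ∀ i, 0 < σ i) (hn : 1 ≤ n) {t : ℝ}
    (ht : t ∈ Icc (0:ℝ) 1) (xb : EuclideanSpace ℝ (Fin n)) :
    Integrable (fun y => Ee ω σ y xb t * (Real.log (Cst σ) - γinn σ y xb / 2)) :=
  integrable_E_mul hω hσ hn ht xb (continuous_lin hσ xb)
    (cg := |Real.log (Cst σ)| + Sσ σ * ‖xb‖ ^ 2) (dg := Sσ σ)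
    (fun y => abs_lin_le hσ xb y)

lemma γbar_eq (xb : EuclideanSpace ℝ (Fin n)) (t : ℝ) :
    γbar ω σ xb t = (∫ y, Ee ω σ y xb t * γinn σ y xb) / Zz ω σ xb t := by
  rw [γbar, ← integral_div]
  congr 1; ext y
  rw [ρcond, div_mul_eq_mul_div]
  rfl

lemma hasDerivAt_E (hω : ∀ i, 0 < ω i) (hσ : ∀ i, 0 < σ i)
    (x xb : EuclideanSpace ℝ (Fin n)) (s : ℝ) :
    HasDerivAt (fun u => Ee ω σ x xb u)
      (Ee ω σ x xb s * (Real.log (Cst σ) - γinn σ x xb / 2)) s := by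
  have h : (fun u => Ee ω σ x xb u) = fun u =>
      Real.exp ((Real.log (Cst ω) - Sq ω x) +
        u * (Real.log (Cst σ) - γinn σ x xb / 2)) := by
    ext u; rw [Ee, fhom_eq hω hσ]
  rw [h]
  have h2 : HasDerivAt (fun u : ℝ => (Real.log (Cst ω) - Sq ω x) +
      u * (Real.log (Cst σ) - γinn σ x xb / 2))
      (Real.log (Cst σ) - γinn σ x xb / 2) s := by
    simpa using ((hasDerivAt_id s).mul_const
      (Real.log (Cst σ) - γinn σ x xb / 2)).const_add (Real.log (Cst ω) - Sq ω x)
  have h3 := h2.exp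
  convert h3 using 1
  rw [Ee, fhom_eq hω hσ]

lemma hasDerivAt_Z (hω : ∀ i, 0 < ω i) (hσ : ∀ i, 0 < σ i) (hn : 1 ≤ n) {t : ℝ}
    (ht : t ∈ Ioo (0:ℝ) 1) (xb : EuclideanSpace ℝ (Fin n)) :
    HasDerivAt (fun s => Zz ω σ xb s)
      (∫ y, Ee ω σ y xb t * (Real.log (Cst σ) - γinn σ y xb / 2)) t := by
  set ε := min t (1 - t) with hε
  have hε_pos : 0 < ε := lt_min ht.1 (by linarith [ht.2])
  have hball : ∀ s ∈ Metric.ball t ε, s ∈ Icc (0:ℝ) 1 := by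
    intro s hs
    rw [Metric.mem_ball, Real.dist_eq] at hs
    constructor
    · have h1 : ε ≤ t := min_le_left _ _
      nlinarith [abs_lt.mp hs]
    · have h2 : ε ≤ 1 - t := min_le_right _ _
      nlinarith [abs_lt.mp hs]
  have ht01 : t ∈ Icc (0:ℝ) 1 := ⟨ht.1.le, ht.2.le⟩
  have key := hasDerivAt_integral_of_dominated_loc_of_deriv_le (𝕜 := ℝ)
    (μ := (volume : Measure (EuclideanSpace ℝ (Fin n))))
    (F := fun s y => Ee ω σ y xb s)
    (F' := fun s y => Ee ω σ y xb s * (Real.log (Cst σ) - γinn σ y xb / 2))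
    (x₀ := t)
    (bound := fun y => (Cst ω * Mp σ * (|Real.log (Cst σ)| + Sσ σ * ‖xb‖ ^ 2) +
      Cst ω * Mp σ * (Sσ σ) * ‖y‖ ^ 2) * Real.exp (-(a0 ω) * ‖y‖ ^ 2))
    (Metric.ball_mem_nhds t hε_pos)
    (Filter.Eventually.of_forall fun s =>
      (continuous_E_y hω hσ xb s).aestronglyMeasurable)
    (integrable_E hω hσ hn ht01 xb)
    ((continuous_E_y hω hσ xb t).mul (continuous_lin hσ xb)).aestronglyMeasurable
    (Filter.Eventually.of_forall fun y s hs => by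
      rw [Real.norm_eq_abs]
      exact E_mul_abs_le hω hσ hn (hball s hs) xb y (abs_lin_le hσ xb y))
    (integrable_poly_gauss (a0 ω) _ _ (a0_pos hω hn))
    (Filter.Eventually.of_forall fun y s hs => hasDerivAt_E hω hσ y xb s)
  exact key.2

lemma ρcond_eq (x xb : EuclideanSpace ℝ (Fin n)) (t : ℝ) :
    ρcond ω σ x xb t = Ee ω σ x xb t / Zz ω σ xb t := rfl

lemma Z_deriv_value (hω : ∀ i, 0 < ω i) (hσ : ∀ i, 0 < σ i) (hn : 1 ≤ n) {t : ℝ}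
    (ht : t ∈ Ioo (0:ℝ) 1) (xb : EuclideanSpace ℝ (Fin n)) :
    (∫ y, Ee ω σ y xb t * (Real.log (Cst σ) - γinn σ y xb / 2)) =
      Zz ω σ xb t * (Real.log (Cst σ) - γbar ω σ xb t / 2) := by
  have ht01 : t ∈ Icc (0:ℝ) 1 := ⟨ht.1.le, ht.2.le⟩
  have h1 : (fun y => Ee ω σ y xb t * (Real.log (Cst σ) - γinn σ y xb / 2)) =
      fun y => Real.log (Cst σ) * Ee ω σ y xb t - (Ee ω σ y xb t * γinn σ y xb) / 2 := by
    ext y; ring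
  rw [h1, integral_sub (((integrable_E hω hσ hn ht01 xb).const_mul _))
    ((integrable_E_mul_γ hω hσ hn ht01 xb).div_const 2),
    integral_const_mul, integral_div]
  have h2 : γbar ω σ xb t = (∫ y, Ee ω σ y xb t * γinn σ y xb) / Zz ω σ xb t :=
    γbar_eq xb t
  have hZ : Zz ω σ xb t ≠ 0 := (Z_pos hω hσ hn ht01 xb).ne'
  rw [h2, Zz]
  rw [Zz] at hZ
  field_simp

lemma hasDerivAt_ρcond (hω : ∀ i, 0 < ω i) (hσ : ∀ i, 0 < σ i) (hn : 1 ≤ n)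
    (x xb : EuclideanSpace ℝ (Fin n)) {t : ℝ} (ht : t ∈ Ioo (0:ℝ) 1) :
    HasDerivAt (fun s => ρcond ω σ x xb s)
      (-(1 / 2) * (ρcond ω σ x xb t * (γinn σ x xb - γbar ω σ xb t))) t := by
  have ht01 : t ∈ Icc (0:ℝ) 1 := ⟨ht.1.le, ht.2.le⟩
  have hN := hasDerivAt_E hω hσ x xb t
  have hZd := hasDerivAt_Z hω hσ hn ht xb
  have hZ0 : Zz ω σ xb t ≠ 0 := (Z_pos hω hσ hn ht01 xb).ne'
  have hdiv := hN.div hZd hZ0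
  have heq : (fun s => ρcond ω σ x xb s) = fun s => Ee ω σ x xb s / Zz ω σ xb s := by
    ext s; rw [ρcond_eq]
  rw [heq]
  refine hdiv.congr_deriv ?_
  rw [Z_deriv_value hω hσ hn ht xb, ρcond_eq]
  field_simp
  ring

lemma continuous_γinn_xb (x : EuclideanSpace ℝ (Fin n)) :
    Continuous fun xb : EuclideanSpace ℝ (Fin n) => γinn σ x xb := by
  have h : (fun xb : EuclideanSpace ℝ (Fin n) => γinn σ x xb) =
      fun xb => ∑ i, (x i - xb i) ^ 2 / σ i ^ 2 := by ext xb; rw [γinn]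
  rw [h]
  exact continuous_finset_sum _ fun i _ =>
    ((continuous_const.sub (continuous_coord i)).pow 2).div_const _

lemma continuous_E_xb (hω : ∀ i, 0 < ω i) (hσ : ∀ i, 0 < σ i)
    (x : EuclideanSpace ℝ (Fin n)) (s : ℝ) :
    Continuous fun xb : EuclideanSpace ℝ (Fin n) => Ee ω σ x xb s := by
  have h : ∀ xb, Ee ω σ x xb s = Real.exp ((Real.log (Cst ω) - Sq ω x) +
      s * (Real.log (Cst σ) - γinn σ x xb / 2)) := by
    intro xb; rw [Ee, fhom_eq hω hσ]
  simp only [h]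
  exact (continuous_const.add (continuous_const.mul
    (continuous_const.sub ((continuous_γinn_xb x).div_const 2)))).rexp

lemma meas_Z (hω : ∀ i, 0 < ω i) (hσ : ∀ i, 0 < σ i) (s : ℝ) :
    StronglyMeasurable fun xb : EuclideanSpace ℝ (Fin n) => Zz ω σ xb s := by
  have h := (continuous_E_pair hω hσ s).stronglyMeasurable.integral_prod_right'
    (ν := (volume : Measure (EuclideanSpace ℝ (Fin n))))
  exact h

lemma meas_ρcond (hω : ∀ i, 0 < ω i) (hσ : ∀ i, 0 < σ i)
    (x : EuclideanSpace ℝ (Fin n)) (s : ℝ) :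
    StronglyMeasurable fun xb : EuclideanSpace ℝ (Fin n) => ρcond ω σ x xb s := by
  have h : (fun xb : EuclideanSpace ℝ (Fin n) => ρcond ω σ x xb s) =
      fun xb => Ee ω σ x xb s / Zz ω σ xb s := by ext xb; rw [ρcond_eq]
  rw [h]
  exact ((continuous_E_xb hω hσ x s).measurable.div
    (meas_Z hω hσ s).measurable).stronglyMeasurable

lemma meas_γbar (hω : ∀ i, 0 < ω i) (hσ : ∀ i, 0 < σ i) (s : ℝ) :
    StronglyMeasurable fun xb : EuclideanSpace ℝ (Fin n) => γbar ω σ xb s := by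
  have hsm : StronglyMeasurable fun p : EuclideanSpace ℝ (Fin n) × EuclideanSpace ℝ (Fin n) =>
      (Ee ω σ p.2 p.1 s / Zz ω σ p.1 s) * γinn σ p.2 p.1 :=
    (((continuous_E_pair hω hσ s).measurable.div
      ((meas_Z hω hσ s).measurable.comp measurable_fst)).mul
      continuous_γinn_pair.measurable).stronglyMeasurable
  have h := hsm.integral_prod_right' (ν := (volume : Measure (EuclideanSpace ℝ (Fin n))))
  exact h

lemma ρcond_nonneg (hω : ∀ i, 0 < ω i) (hσ : ∀ i, 0 < σ i) (hn : 1 ≤ n) {s : ℝ}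
    (hs : s ∈ Icc (0:ℝ) 1) (x xb : EuclideanSpace ℝ (Fin n)) : 0 ≤ ρcond ω σ x xb s := by
  rw [ρcond_eq]
  exact div_nonneg (E_pos hω hσ x xb s).le (Z_pos hω hσ hn hs xb).le

lemma ρcond_le (hω : ∀ i, 0 < ω i) (hσ : ∀ i, 0 < σ i) (hn : 1 ≤ n) {s R : ℝ}
    (hs : s ∈ Icc (0:ℝ) 1) {x xb : EuclideanSpace ℝ (Fin n)} (hxb : ‖xb‖ ≤ R) :
    ρcond ω σ x xb s ≤ (Cst ω * Mp σ) / Zmin ω σ R := by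
  rw [ρcond_eq]
  have hCM : (0:ℝ) ≤ Cst ω * Mp σ := (mul_pos (Cst_pos hω) (Mp_pos hσ)).le
  have hE : Ee ω σ x xb s ≤ Cst ω * Mp σ := by
    have h1 := E_le hω hσ hn hs x xb
    have h2 : Real.exp (-(a0 ω) * ‖x‖ ^ 2) ≤ 1 :=
      Real.exp_le_one_iff.mpr (by nlinarith [a0_pos hω hn, sq_nonneg ‖x‖])
    nlinarith [Real.exp_pos (-(a0 ω) * ‖x‖ ^ 2)]
  exact div_le_div₀ hCM hE (Zmin_pos hω hσ R) (Z_ge hω hσ hn hs hxb)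

lemma γbar_nonneg (hω : ∀ i, 0 < ω i) (hσ : ∀ i, 0 < σ i) (hn : 1 ≤ n) {s : ℝ}
    (hs : s ∈ Icc (0:ℝ) 1) (xb : EuclideanSpace ℝ (Fin n)) : 0 ≤ γbar ω σ xb s := by
  rw [γbar]
  exact integral_nonneg fun y =>
    mul_nonneg (ρcond_nonneg hω hσ hn hs y xb) (γinn_nonneg y xb)

variable (ω σ) in
/-- upper bound for the expected innovation over the data support -/
def Γb (R : ℝ) : ℝ := (∫ y : EuclideanSpace ℝ (Fin n),
    (Cst ω * Mp σ * (2 * Sσ σ * R ^ 2) + Cst ω * Mp σ * (2 * Sσ σ) * ‖y‖ ^ 2) *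
      Real.exp (-(a0 ω) * ‖y‖ ^ 2)) / Zmin ω σ R

lemma γbar_le (hω : ∀ i, 0 < ω i) (hσ : ∀ i, 0 < σ i) (hn : 1 ≤ n) {s R : ℝ}
    (hs : s ∈ Icc (0:ℝ) 1) {xb : EuclideanSpace ℝ (Fin n)} (hxb : ‖xb‖ ≤ R) :
    γbar ω σ xb s ≤ Γb ω σ R := by
  rw [γbar_eq, Γb]
  have hint1 := integrable_E_mul_γ hω hσ hn hs xb
  have hint2 := integrable_poly_gauss (n := n) (a0 ω) (Cst ω * Mp σ * (2 * Sσ σ * R ^ 2))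
    (Cst ω * Mp σ * (2 * Sσ σ)) (a0_pos hω hn)
  have hmono : (∫ y, Ee ω σ y xb s * γinn σ y xb) ≤ ∫ y : EuclideanSpace ℝ (Fin n),
      (Cst ω * Mp σ * (2 * Sσ σ * R ^ 2) + Cst ω * Mp σ * (2 * Sσ σ) * ‖y‖ ^ 2) *
        Real.exp (-(a0 ω) * ‖y‖ ^ 2) := by
    refine integral_mono hint1 hint2 fun y => ?_
    have h2 : ‖xb‖ ^ 2 ≤ R ^ 2 := by nlinarith [norm_nonneg xb]
    have hb : |γinn σ y xb| ≤ 2 * Sσ σ * R ^ 2 + 2 * Sσ σ * ‖y‖ ^ 2 := by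
      refine (abs_γinn_le hσ xb y).trans ?_
      nlinarith [Sσ_nonneg (σ := σ)]
    have h1 := E_mul_abs_le hω hσ hn hs xb y hb
    calc Ee ω σ y xb s * γinn σ y xb ≤ |Ee ω σ y xb s * γinn σ y xb| := le_abs_self _
      _ ≤ (Cst ω * Mp σ * (2 * Sσ σ * R ^ 2) +
            Cst ω * Mp σ * (2 * Sσ σ * ‖y‖ ^ 2)) * Real.exp (-(a0 ω) * ‖y‖ ^ 2) := by
          refine h1.trans (le_of_eq ?_); ring
      _ = (Cst ω * Mp σ * (2 * Sσ σ * R ^ 2) +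
            Cst ω * Mp σ * (2 * Sσ σ) * ‖y‖ ^ 2) * Real.exp (-(a0 ω) * ‖y‖ ^ 2) := by
          ring
  have hnum_nonneg : (0:ℝ) ≤ ∫ y, Ee ω σ y xb s * γinn σ y xb :=
    integral_nonneg fun y => mul_nonneg (E_pos hω hσ y xb s).le (γinn_nonneg y xb)
  exact div_le_div₀ (hnum_nonneg.trans hmono) hmono (Zmin_pos hω hσ R)
    (Z_ge hω hσ hn hs hxb)

end P2

open P2 in
theorem aux_main_deriv
    (n : ℕ) (hn : 1 ≤ n) (ω σ : Fin n → ℝ)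
    (hω : ∀ i, 0 < ω i) (hσ : ∀ i, 0 < σ i)
    (μ : Measure (EuclideanSpace ℝ (Fin n))) [IsProbabilityMeasure μ]
    (hμ : ∃ K : Set (EuclideanSpace ℝ (Fin n)), IsCompact K ∧ μ Kᶜ = 0)
    (x : EuclideanSpace ℝ (Fin n)) {t : ℝ} (ht : t ∈ Set.Ioo (0 : ℝ) 1) :
    HasDerivAt (fun s => ρbar ω σ μ x s) (-(1 / 2) * hsrc ω σ μ x t) t := by
  obtain ⟨K, hK, hKc⟩ := hμ
  obtain ⟨R, hKR⟩ := hK.isBounded.subset_closedBall 0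
  set R' := max R 0 with hR'
  have hKR' : ∀ xb ∈ K, ‖xb‖ ≤ R' := by
    intro xb h
    have h1 := hKR h
    rw [Metric.mem_closedBall, dist_zero_right] at h1
    exact h1.trans (le_max_left _ _)
  have haeK : ∀ᵐ xb ∂μ, xb ∈ K := by
    rw [MeasureTheory.ae_iff]
    exact hKc
  set ε := min t (1 - t) with hεdef
  have hε : 0 < ε := lt_min ht.1 (by linarith [ht.2])
  have hball : ∀ s ∈ Metric.ball t ε, s ∈ Set.Ioo (0:ℝ) 1 := by
    intro s hs
    rw [Metric.mem_ball, Real.dist_eq] at hs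
    have h1 : ε ≤ t := min_le_left _ _
    have h2 : ε ≤ 1 - t := min_le_right _ _
    constructor
    · nlinarith [abs_lt.mp hs]
    · nlinarith [abs_lt.mp hs]
  have ht01 : t ∈ Icc (0:ℝ) 1 := ⟨ht.1.le, ht.2.le⟩
  set Cρ := (Cst ω * Mp σ) / Zmin ω σ R' with hCρ
  have hCρ0 : 0 ≤ Cρ :=
    div_nonneg (mul_pos (Cst_pos hω) (Mp_pos hσ)).le (Zmin_pos hω hσ R').le
  set Γx := 2 * Sσ σ * R' ^ 2 + 2 * Sσ σ * ‖x‖ ^ 2 with hΓx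
  have key := hasDerivAt_integral_of_dominated_loc_of_deriv_le (𝕜 := ℝ) (μ := μ)
    (F := fun s xb => ρcond ω σ x xb s)
    (F' := fun s xb => -(1/2) * (ρcond ω σ x xb s * (γinn σ x xb - γbar ω σ xb s)))
    (x₀ := t)
    (bound := fun _ => (1/2) * (Cρ * (Γx + Γb ω σ R')))
    (Metric.ball_mem_nhds t hε)
    (Filter.Eventually.of_forall fun s => (meas_ρcond hω hσ x s).aestronglyMeasurable)
    (by
      refine Integrable.mono' (integrable_const Cρ)
        (meas_ρcond hω hσ x t).aestronglyMeasurable ?_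
      filter_upwards [haeK] with xb hxb
      rw [Real.norm_eq_abs, abs_of_nonneg (ρcond_nonneg hω hσ hn ht01 x xb)]
      exact ρcond_le hω hσ hn ht01 (hKR' xb hxb))
    ((((meas_ρcond hω hσ x t).mul
      ((continuous_γinn_xb x).stronglyMeasurable.sub (meas_γbar hω hσ t))).const_mul
        (-(1/2))).aestronglyMeasurable)
    (by
      filter_upwards [haeK] with xb hxb
      intro s hs
      have hs01 : s ∈ Icc (0:ℝ) 1 :=
        ⟨(hball s hs).1.le, (hball s hs).2.le⟩
      have hρ0 := ρcond_nonneg hω hσ hn hs01 x xb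
      have hρle := ρcond_le hω hσ hn hs01 (x := x) (hKR' xb hxb)
      have hγx : |γinn σ x xb| ≤ Γx := by
        refine (abs_γinn_le hσ xb x).trans ?_
        have h2 : ‖xb‖ ^ 2 ≤ R' ^ 2 := by
          have := hKR' xb hxb
          nlinarith [norm_nonneg xb]
        nlinarith [Sσ_nonneg (σ := σ)]
      have hγb0 := γbar_nonneg hω hσ hn hs01 xb
      have hγble := γbar_le hω hσ hn hs01 (hKR' xb hxb)
      have habs : |γinn σ x xb - γbar ω σ xb s| ≤ Γx + Γb ω σ R' := by
        refine (abs_sub _ _).trans ?_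
        rw [abs_of_nonneg hγb0]
        linarith
      rw [Real.norm_eq_abs, abs_mul, abs_mul]
      have h3 : |(-(1/2) : ℝ)| = 1/2 := by norm_num
      rw [h3, abs_of_nonneg hρ0]
      refine mul_le_mul_of_nonneg_left ?_ (by norm_num)
      exact mul_le_mul hρle habs (abs_nonneg _) hCρ0)
    (integrable_const _)
    (Filter.Eventually.of_forall fun xb s hs =>
      hasDerivAt_ρcond hω hσ hn x xb (hball s hs))
  obtain ⟨-, hder⟩ := key
  have hval : (∫ xb, -(1/2 : ℝ) * (ρcond ω σ x xb t * (γinn σ x xb - γbar ω σ xb t)) ∂μ)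
      = -(1/2) * hsrc ω σ μ x t := by
    rw [integral_const_mul]; rfl
  rw [hval] at hder
  exact hder


/-- Proposition 2 (core mechanism): if the potential solves the probabilistic
Poisson equation at every time, the data likelihood homotopy solves the
continuity (Fokker–Planck) equation `∂ₜρ̄ + ∇·(ρ̄∇Φ) = 0`. -/
theorem poisson_potential_gives_continuity_equation
    (n : ℕ) (hn : 1 ≤ n) (ω σ : Fin n → ℝ)
    (hω : ∀ i, 0 < ω i) (hσ : ∀ i, 0 < σ i)
    (μ : Measure (EuclideanSpace ℝ (Fin n))) [IsProbabilityMeasure μ]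
    (hμ : ∃ K : Set (EuclideanSpace ℝ (Fin n)), IsCompact K ∧ μ Kᶜ = 0)
    (Φ : EuclideanSpace ℝ (Fin n) → ℝ → ℝ)
    (hΦ : ∀ t ∈ Set.Ioo (0 : ℝ) 1, ContDiff ℝ 2 (fun x => Φ x t))
    (hpoisson : ∀ x : EuclideanSpace ℝ (Fin n), ∀ t ∈ Set.Ioo (0 : ℝ) 1,
      ⟪gradient (fun y => ρbar ω σ μ y t) x, gradient (fun y => Φ y t) x⟫ +
        ρbar ω σ μ x t * lap (fun y => Φ y t) x = (1 / 2) * hsrc ω σ μ x t) :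
    ∀ x : EuclideanSpace ℝ (Fin n), ∀ t ∈ Set.Ioo (0 : ℝ) 1,
      HasDerivAt (fun s => ρbar ω σ μ x s)
        (-(⟪gradient (fun y => ρbar ω σ μ y t) x, gradient (fun y => Φ y t) x⟫ +
          ρbar ω σ μ x t * lap (fun y => Φ y t) x)) t := by
  intro x t ht
  have h := aux_main_deriv n hn ω σ hω hσ μ hμ x ht
  rw [hpoisson x t ht]
  convert h using 1
  ring
end
end
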